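/- arXiv:2402.06199 — 6 statements merged into one kernel-verified Lean document; each statement's English description precedes it below -/
import Mathlib

section
/- Let v : Fin n → ℝ² be a closed polygon (indices mod n), with edge vectors e_k = v_{k+1} − v_k, edge midpoints m_k = (v_k + v_{k+1})/2, scaled normals rot(e_k) where rot(x, y) = (y, −x), and signed area A = (1/2) ∑_k ((v_k)_1 (v_{k+1})_2 − (v_{k+1})_1 (v_k)_2). Then for every point p ∈ ℝ² and every vector u ∈ ℝ², ∑_k ⟪m_k − p, u⟫ • rot(e_k) = A • u; equivalently, the dyadic sum ∑_k rot(e_k) ⊗ (m_k − p) equals A times the identity matrix. -/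
open scoped RealInnerProductSpace BigOperators

/-- The clockwise quarter-turn `rot (x, y) = (y, -x)` in the plane. -/
noncomputable def rot (w : EuclideanSpace ℝ (Fin 2)) : EuclideanSpace ℝ (Fin 2) :=
  (WithLp.equiv 2 (Fin 2 → ℝ)).symm ![w 1, -(w 0)]

/-!
Each summand `⟪m_k - p, u⟫ • rot (e_k)` equals the shoelace term of edge `k` times `u` plus the
difference `φ (v (k+1)) - φ (v k)` of the potential `φ x = ⟪x / 2 - p, u⟫ • rot x`. Around a
closed polygon these differences telescope to zero, leaving `A • u`.
-/

theorem Fin.sum_add_one_sub_eq_zero {M : Type*} [AddCommGroup M] {n : ℕ} [NeZero n]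
    (f : Fin n → M) : ∑ k : Fin n, (f (k + 1) - f k) = 0 := by
  rw [Finset.sum_sub_distrib, sub_eq_zero]
  exact Fintype.sum_equiv (Equiv.addRight 1) _ _ fun _ => rfl

@[simp]
theorem rot_apply_zero (w : EuclideanSpace ℝ (Fin 2)) : rot w 0 = w 1 := rfl

@[simp]
theorem rot_apply_one (w : EuclideanSpace ℝ (Fin 2)) : rot w 1 = -w 0 := rfl

theorem inner_midpoint_sub_smul_rot_sub (a b p u : EuclideanSpace ℝ (Fin 2)) :
    ⟪(2 : ℝ)⁻¹ • (a + b) - p, u⟫ • rot (b - a)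
      = ((1 / 2 : ℝ) * (a 0 * b 1 - b 0 * a 1)) • u
        + (⟪(2 : ℝ)⁻¹ • b - p, u⟫ • rot b - ⟪(2 : ℝ)⁻¹ • a - p, u⟫ • rot a) := by
  ext i
  fin_cases i <;>
    simp only [PiLp.inner_apply, RCLike.inner_apply, conj_trivial, Fin.sum_univ_two,
      PiLp.add_apply, PiLp.sub_apply, PiLp.smul_apply, smul_eq_mul, Fin.zero_eta, Fin.mk_one,
      rot_apply_zero, rot_apply_one] <;>
    ring

/-- For a closed polygon `v : Fin n → ℝ²` (indices mod `n`) with edge vectors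
`e k = v (k+1) - v k`, edge midpoints `m k = (v k + v (k+1))/2`, scaled outward
normals `rot (e k)` and shoelace signed area `A`, for every point `p` and every
vector `u` one has `∑ k ⟪m k - p, u⟫ • rot (e k) = A • u`, i.e. the dyadic sum
`∑ k rot (e k) ⊗ (m k - p)` of the Green-Gauss scheme equals `A` times the identity. -/
theorem greenGauss_dyadic_sum_eq_area_smul_id (n : ℕ) [NeZero n]
    (v : Fin n → EuclideanSpace ℝ (Fin 2))
    (p u : EuclideanSpace ℝ (Fin 2)) :
    ∑ k : Fin n, ⟪((2 : ℝ)⁻¹ • (v k + v (k + 1))) - p, u⟫ • rot (v (k + 1) - v k)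
      = ((1 / 2 : ℝ) * ∑ k : Fin n,
          (v k 0 * v (k + 1) 1 - v (k + 1) 0 * v k 1)) • u := by
  simp_rw [inner_midpoint_sub_smul_rot_sub, Finset.sum_add_distrib,
    Fin.sum_add_one_sub_eq_zero fun k => ⟪(2 : ℝ)⁻¹ • v k - p, u⟫ • rot (v k), add_zero,
    Finset.mul_sum, Finset.sum_smul]
end

section
/- Let E = EuclideanSpace ℝ (Fin d), let U ⊆ E be an open convex set, and let φ : E → ℝ be twice continuously differentiable on U with ‖iteratedFDeriv ℝ 2 φ z‖ ≤ M for all z ∈ U. Let x ∈ U, b ∈ E, and δ₁ ≠ δ₂ be real numbers such that x + δ₁ • b and x + δ₂ • b (and the segments joining them to x) lie in U. Then |(φ(x + δ₂ • b) − φ(x + δ₁ • b))/(δ₂ − δ₁) − ⟪b, gradient φ x⟫| ≤ M ‖b‖² (δ₁² + δ₂²) / (2 |δ₂ − δ₁|). -/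
/-!
The bound on the second derivative makes `φ'` `M`-Lipschitz on the convex set `U`, so along
`t ↦ x + t • v` the remainder `φ (x + t • v) - φ x - t • φ' x v` has derivative of norm at most
`M t ‖v‖²`; comparing it with the boundary function `M t² ‖v‖² / 2` gives the second-order Taylor
bound `M ‖v‖² / 2` at `t = 1`. For `v = δ₁ • b` and `v = δ₂ • b`, the difference of the two
remainders divided by `δ₂ - δ₁` is exactly the difference quotient minus `φ' x b = ⟪b, ∇φ x⟫`.
-/

open Set
open scoped RealInnerProductSpace

variable {E F : Type*} [NormedAddCommGroup E] [NormedSpace ℝ E]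
  [NormedAddCommGroup F] [NormedSpace ℝ F]

theorem norm_fderiv_fderiv_eq_norm_iteratedFDeriv_two (f : E → F) (z : E) :
    ‖fderiv ℝ (fderiv ℝ f) z‖ = ‖iteratedFDeriv ℝ 2 f z‖ := by
  rw [← norm_iteratedFDeriv_one, norm_iteratedFDeriv_fderiv]

theorem Convex.norm_image_add_sub_sub_fderiv_le {s : Set E} (hs : Convex ℝ s) {f : E → F}
    {x v : E} {L : ℝ} (hf : ∀ z ∈ s, DifferentiableAt ℝ f z)
    (hL : ∀ z ∈ s, ‖fderiv ℝ f z - fderiv ℝ f x‖ ≤ L * ‖z - x‖) (hx : x ∈ s) (hxv : x + v ∈ s) :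
    ‖f (x + v) - f x - fderiv ℝ f x v‖ ≤ L / 2 * ‖v‖ ^ 2 := by
  have hseg : ∀ t ∈ Icc (0 : ℝ) 1, x + t • v ∈ s := fun t ht => hs.add_smul_mem hx hxv ht
  let g : ℝ → F := fun t => f (x + t • v) - f x - t • fderiv ℝ f x v
  have hg : ∀ t ∈ Icc (0 : ℝ) 1,
      HasDerivAt g (fderiv ℝ f (x + t • v) v - fderiv ℝ f x v) t := by
    intro t ht
    have hline : HasDerivAt (fun t : ℝ => x + t • v) v t := by
      simpa using ((hasDerivAt_id t).smul_const v).const_add x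
    exact ((((hf _ (hseg t ht)).hasFDerivAt.comp_hasDerivAt t hline).sub_const (f x)).sub
      ((hasDerivAt_id t).smul_const (fderiv ℝ f x v))).congr_deriv (by simp)
  have hg' : ∀ t ∈ Ico (0 : ℝ) 1,
      ‖fderiv ℝ f (x + t • v) v - fderiv ℝ f x v‖ ≤ L * ‖v‖ ^ 2 * t := by
    intro t ht
    have ht' := Ico_subset_Icc_self ht
    calc ‖fderiv ℝ f (x + t • v) v - fderiv ℝ f x v‖
        = ‖(fderiv ℝ f (x + t • v) - fderiv ℝ f x) v‖ := rfl
      _ ≤ ‖fderiv ℝ f (x + t • v) - fderiv ℝ f x‖ * ‖v‖ := ContinuousLinearMap.le_opNorm _ _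
      _ ≤ L * ‖x + t • v - x‖ * ‖v‖ := by gcongr; exact hL _ (hseg t ht')
      _ = L * ‖v‖ ^ 2 * t := by
        rw [add_sub_cancel_left, norm_smul, Real.norm_of_nonneg ht'.1]; ring
  have hB : ∀ t, HasDerivAt (fun t => L / 2 * ‖v‖ ^ 2 * t ^ 2) (L * ‖v‖ ^ 2 * t) t := fun t =>
    ((hasDerivAt_pow 2 t).const_mul (L / 2 * ‖v‖ ^ 2)).congr_deriv (by norm_num; ring)
  have key := image_norm_le_of_norm_deriv_right_le_deriv_boundary
    (fun t ht => (hg t ht).continuousAt.continuousWithinAt)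
    (fun t ht => (hg t (Ico_subset_Icc_self ht)).hasDerivWithinAt) (by simp [g]) hB hg'
    (right_mem_Icc.mpr zero_le_one)
  simpa [g] using key

theorem Convex.norm_fderiv_sub_fderiv_le_of_contDiffOn_two {s : Set E} (hs : Convex ℝ s)
    (hso : IsOpen s) {f : E → F} (hf : ContDiffOn ℝ 2 f s) {M : ℝ}
    (hM : ∀ z ∈ s, ‖iteratedFDeriv ℝ 2 f z‖ ≤ M) {x y : E} (hx : x ∈ s) (hy : y ∈ s) :
    ‖fderiv ℝ f y - fderiv ℝ f x‖ ≤ M * ‖y - x‖ := by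
  have hf' : ∀ z ∈ s, DifferentiableAt ℝ (fderiv ℝ f) z := fun z hz =>
    ((hf.fderiv_of_isOpen (m := 1) hso (by norm_num)).differentiableOn (by norm_num) z hz
      ).differentiableAt (hso.mem_nhds hz)
  refine hs.norm_image_sub_le_of_norm_fderiv_le hf' (fun z hz => ?_) hx hy
  rw [norm_fderiv_fderiv_eq_norm_iteratedFDeriv_two]
  exact hM z hz

theorem Convex.norm_image_add_sub_sub_fderiv_le_of_contDiffOn_two {s : Set E} (hs : Convex ℝ s)
    (hso : IsOpen s) {f : E → F} (hf : ContDiffOn ℝ 2 f s) {M : ℝ}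
    (hM : ∀ z ∈ s, ‖iteratedFDeriv ℝ 2 f z‖ ≤ M) {x v : E} (hx : x ∈ s) (hxv : x + v ∈ s) :
    ‖f (x + v) - f x - fderiv ℝ f x v‖ ≤ M / 2 * ‖v‖ ^ 2 :=
  hs.norm_image_add_sub_sub_fderiv_le
    (fun z hz => (hf.differentiableOn (by norm_num) z hz).differentiableAt (hso.mem_nhds hz))
    (fun z hz => hs.norm_fderiv_sub_fderiv_le_of_contDiffOn_two hso hf hM hx hz) hx hxv

/-- Truncation error of the two-point difference quotient approximation of the
directional derivative `⟪b, ∇φ x⟫` along `b`, for a `C²` function whose second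
derivative is bounded by `M` on an open convex set `U` (the segments joining
`x + δ₁ • b` and `x + δ₂ • b` to `x` lie in `U` by convexity). -/
theorem difference_quotient_directional_derivative_error (d : ℕ)
    (U : Set (EuclideanSpace ℝ (Fin d))) (hU : IsOpen U) (hUconv : Convex ℝ U)
    (φ : EuclideanSpace ℝ (Fin d) → ℝ) (hφ : ContDiffOn ℝ 2 φ U)
    (M : ℝ) (hM : ∀ z ∈ U, ‖iteratedFDeriv ℝ 2 φ z‖ ≤ M)
    (x : EuclideanSpace ℝ (Fin d)) (hx : x ∈ U)
    (b : EuclideanSpace ℝ (Fin d)) (δ₁ δ₂ : ℝ) (hδ : δ₁ ≠ δ₂)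
    (h₁ : x + δ₁ • b ∈ U) (h₂ : x + δ₂ • b ∈ U) :
    |(φ (x + δ₂ • b) - φ (x + δ₁ • b)) / (δ₂ - δ₁) - ⟪b, gradient φ x⟫|
      ≤ M * ‖b‖ ^ 2 * (δ₁ ^ 2 + δ₂ ^ 2) / (2 * |δ₂ - δ₁|) := by
  set g := fderiv ℝ φ x b
  have taylor : ∀ δ : ℝ, x + δ • b ∈ U →
      |φ (x + δ • b) - φ x - δ * g| ≤ M / 2 * ‖b‖ ^ 2 * δ ^ 2 := fun δ hδU => by
    simpa [norm_smul, mul_pow, mul_comm, mul_left_comm, mul_assoc] using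
      hUconv.norm_image_add_sub_sub_fderiv_le_of_contDiffOn_two hU hφ hM hx hδU
  have hD : δ₂ - δ₁ ≠ 0 := sub_ne_zero.mpr hδ.symm
  rw [real_inner_comm, inner_gradient_left]
  calc |(φ (x + δ₂ • b) - φ (x + δ₁ • b)) / (δ₂ - δ₁) - g|
      = |(φ (x + δ₂ • b) - φ x - δ₂ * g) - (φ (x + δ₁ • b) - φ x - δ₁ * g)| / |δ₂ - δ₁| := by
        rw [← abs_div]; congr 1; field_simp; ring
    _ ≤ (M / 2 * ‖b‖ ^ 2 * δ₂ ^ 2 + M / 2 * ‖b‖ ^ 2 * δ₁ ^ 2) / |δ₂ - δ₁| := by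
        gcongr; exact (abs_sub _ _).trans (add_le_add (taylor δ₂ h₂) (taylor δ₁ h₁))
    _ = M * ‖b‖ ^ 2 * (δ₁ ^ 2 + δ₂ ^ 2) / (2 * |δ₂ - δ₁|) := by
        field_simp; ring
end

section
/- Let E = EuclideanSpace ℝ (Fin d), let x_i ∈ E, and let (a_f)_{f ∈ Fin m}, (b_f)_{f ∈ Fin m} be vectors in E and (x_f)_{f ∈ Fin m} points in E. Let P : E →L[ℝ] E be the continuous linear map P g = ∑_f ⟪b_f, g⟫ • a_f, and suppose P admits a continuous linear inverse P⁻¹. Let φ : E → ℝ be differentiable with gradient that is L-Lipschitz on a set containing x_i and all x_f. Then the gradient reconstructed from the exact directional derivatives satisfies ‖P⁻¹ (∑_f ⟪b_f, gradient φ x_f⟫ • a_f) − gradient φ x_i‖ ≤ ‖P⁻¹‖ · L · ∑_f ‖a_f‖ ‖b_f‖ ‖x_f − x_i‖. -/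
open scoped RealInnerProductSpace BigOperators

/-! Because `Pinv` inverts `P`, the reconstruction error equals `Pinv` applied to
`∑ f ⟪b f, ∇φ (x f) - ∇φ xᵢ⟫ • a f`; the operator norm, the triangle and Cauchy–Schwarz
inequalities and the Lipschitz bound on `∇φ` then give the estimate term by term. -/

section DyadicSum

variable {ι E : Type*} [NormedAddCommGroup E] [InnerProductSpace ℝ E]

theorem norm_sum_inner_smul_le (t : Finset ι) (a b v : ι → E) :
    ‖∑ f ∈ t, ⟪b f, v f⟫ • a f‖ ≤ ∑ f ∈ t, ‖a f‖ * ‖b f‖ * ‖v f‖ := by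
  refine (norm_sum_le _ _).trans (Finset.sum_le_sum fun f _ => ?_)
  calc ‖⟪b f, v f⟫ • a f‖ = ‖⟪b f, v f⟫‖ * ‖a f‖ := norm_smul _ _
    _ ≤ ‖b f‖ * ‖v f‖ * ‖a f‖ := by gcongr; exact norm_inner_le_norm _ _
    _ = ‖a f‖ * ‖b f‖ * ‖v f‖ := by ring

theorem map_sum_inner_smul_sub_of_map_eq (t : Finset ι) (a b w : ι → E) (g : E)
    (Pinv : E →L[ℝ] E) (hg : Pinv (∑ f ∈ t, ⟪b f, g⟫ • a f) = g) :
    Pinv (∑ f ∈ t, ⟪b f, w f⟫ • a f) - g = Pinv (∑ f ∈ t, ⟪b f, w f - g⟫ • a f) := by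
  simp only [inner_sub_right, sub_smul, Finset.sum_sub_distrib, map_sub, hg]

end DyadicSum

theorem generalized_reconstruction_error_E1_general (d m : ℕ)
    (xi : EuclideanSpace ℝ (Fin d))
    (a b x : Fin m → EuclideanSpace ℝ (Fin d))
    (P Pinv : EuclideanSpace ℝ (Fin d) →L[ℝ] EuclideanSpace ℝ (Fin d))
    (hP : ∀ g, P g = ∑ f : Fin m, ⟪b f, g⟫ • a f)
    (hleft : Function.LeftInverse Pinv P)
    (φ : EuclideanSpace ℝ (Fin d) → ℝ)
    (s : Set (EuclideanSpace ℝ (Fin d))) (hxi : xi ∈ s) (hxf : ∀ f, x f ∈ s)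
    (L : NNReal)
    (hL : LipschitzOnWith L (fun z => gradient φ z) s) :
    ‖Pinv (∑ f : Fin m, ⟪b f, gradient φ (x f)⟫ • a f) - gradient φ xi‖
      ≤ ‖Pinv‖ * L * ∑ f : Fin m, ‖a f‖ * ‖b f‖ * ‖x f - xi‖ := by
  calc ‖Pinv (∑ f : Fin m, ⟪b f, gradient φ (x f)⟫ • a f) - gradient φ xi‖
      = ‖Pinv (∑ f : Fin m, ⟪b f, gradient φ (x f) - gradient φ xi⟫ • a f)‖ := by
        rw [map_sum_inner_smul_sub_of_map_eq _ _ _ _ _ _ (hP _ ▸ hleft _)]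
    _ ≤ ‖Pinv‖ * ∑ f : Fin m, ‖a f‖ * ‖b f‖ * ‖gradient φ (x f) - gradient φ xi‖ := by
        grw [Pinv.le_opNorm, norm_sum_inner_smul_le]
    _ ≤ ‖Pinv‖ * ∑ f : Fin m, ‖a f‖ * ‖b f‖ * (L * ‖x f - xi‖) := by
        gcongr with f
        exact hL.norm_sub_le (hxf f) hxi
    _ = ‖Pinv‖ * L * ∑ f : Fin m, ‖a f‖ * ‖b f‖ * ‖x f - xi‖ := by
        simp only [Finset.mul_sum]
        exact Finset.sum_congr rfl fun f _ => by ring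

/-- Error bound `E₁` for the generalized gradient reconstruction: if the dyadic-sum
operator `P g = ∑ f ⟪b f, g⟫ • a f` has a continuous linear inverse `Pinv` and the
gradient of `φ` is `L`-Lipschitz on a set containing the cell center `xᵢ` and all
neighbourhood points `x f`, then the gradient reconstructed from the exact
directional derivatives at the points `x f` satisfies
`‖Pinv (∑ f ⟪b f, ∇φ (x f)⟫ • a f) - ∇φ xᵢ‖ ≤ ‖Pinv‖ * L * ∑ f ‖a f‖ ‖b f‖ ‖x f - xᵢ‖`. -/
theorem generalized_reconstruction_error_E1 (d m : ℕ)
    (xi : EuclideanSpace ℝ (Fin d))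
    (a b x : Fin m → EuclideanSpace ℝ (Fin d))
    (P Pinv : EuclideanSpace ℝ (Fin d) →L[ℝ] EuclideanSpace ℝ (Fin d))
    (hP : ∀ g, P g = ∑ f : Fin m, ⟪b f, g⟫ • a f)
    (hleft : Function.LeftInverse Pinv P)
    (hright : Function.RightInverse Pinv P)
    (φ : EuclideanSpace ℝ (Fin d) → ℝ)
    (hdiff : Differentiable ℝ φ)
    (s : Set (EuclideanSpace ℝ (Fin d))) (hxi : xi ∈ s) (hxf : ∀ f, x f ∈ s)
    (L : NNReal)
    (hL : LipschitzOnWith L (fun z => gradient φ z) s) :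
    ‖Pinv (∑ f : Fin m, ⟪b f, gradient φ (x f)⟫ • a f) - gradient φ xi‖
      ≤ ‖Pinv‖ * L * ∑ f : Fin m, ‖a f‖ * ‖b f‖ * ‖x f - xi‖ :=
  generalized_reconstruction_error_E1_general d m xi a b x P Pinv hP hleft φ s hxi hxf L hL
end

section
/- Let E = EuclideanSpace ℝ (Fin d), let U ⊆ E be an open convex set, and let φ : E → ℝ be twice continuously differentiable on U with ‖iteratedFDeriv ℝ 2 φ z‖ ≤ M for all z ∈ U. Let x_i ∈ U, let (a_f)_{f ∈ Fin m}, (b_f)_{f ∈ Fin m} be vectors in E, (x_f)_{f ∈ Fin m} points of U, and for each f let δ_{f,1} ≠ δ_{f,2} be reals with x_{f,1} = x_f + δ_{f,1} • b_f ∈ U and x_{f,2} = x_f + δ_{f,2} • b_f ∈ U. Let P : E →L[ℝ] E, P g = ∑_f ⟪b_f, g⟫ • a_f, admit a continuous linear inverse P⁻¹. Then the fully discrete reconstructed gradient G = P⁻¹ ∑_f ((φ(x_{f,2}) − φ(x_{f,1}))/(δ_{f,2} − δ_{f,1})) • a_f satisfies ‖G − gradient φ x_i‖ ≤ ‖P⁻¹‖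 · M · ∑_f ‖a_f‖ ( ‖b_f‖ ‖x_f − x_i‖ + ‖b_f‖² (δ_{f,1}² + δ_{f,2}²)/(2 |δ_{f,2} − δ_{f,1}|) ). -/
open Set
open scoped RealInnerProductSpace

/-! A bound `M` on the second derivative over a convex set makes the derivative `M`-Lipschitz
there, so the first-order Taylor remainder is at most `M / 2 * ‖h‖ ^ 2`. Hence each difference
quotient along `b f` differs from `Dφ (x f) (b f)` by the `E₂` term, and moving the base point
from `x f` to `xi` costs the `E₁` term `M * ‖b f‖ * ‖x f - xi‖`. Since `Pinv` reconstructs `g`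
exactly from the data `⟪b f, g⟫`, the total error is `Pinv` applied to `∑ f, (error f) • a f`. -/

section

variable {E F : Type*} [NormedAddCommGroup E] [NormedSpace ℝ E]
  [NormedAddCommGroup F] [NormedSpace ℝ F]

theorem Convex.norm_image_sub_sub_fderiv_le {f : E → F} {f' : E → E →L[ℝ] F} {s : Set E}
    {M : ℝ} {x y : E} (hs : Convex ℝ s) (hf : ∀ z ∈ s, HasFDerivWithinAt f (f' z) s z)
    (hf' : ∀ z ∈ s, ‖f' z - f' x‖ ≤ M * ‖z - x‖) (xs : x ∈ s) (ys : y ∈ s) :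
    ‖f y - f x - f' x (y - x)‖ ≤ M / 2 * ‖y - x‖ ^ 2 := by
  set g := (AffineMap.lineMap x y : ℝ → E)
  have segm : MapsTo g (Icc 0 1) s := hs.mapsTo_lineMap xs ys
  set h : ℝ → F := fun t => f (g t) - f x - t • f' x (y - x)
  have hD : ∀ t ∈ Icc (0 : ℝ) 1,
      HasDerivWithinAt h (f' (g t) (y - x) - f' x (y - x)) (Icc 0 1) t := fun t ht => by
    have := ((hf (g t) (segm ht)).comp_hasDerivWithinAt t
      AffineMap.hasDerivWithinAt_lineMap segm).sub_const (f x)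
    have hlin := (hasDerivWithinAt_id t (Icc 0 1)).smul_const (f' x (y - x))
    rw [one_smul] at hlin
    exact this.sub hlin
  have bound : ∀ t ∈ Ico (0 : ℝ) 1,
      ‖f' (g t) (y - x) - f' x (y - x)‖ ≤ M * ‖y - x‖ ^ 2 * t := fun t ht => by
    have hgt : ‖g t - x‖ = t * ‖y - x‖ := by
      rw [← dist_eq_norm, dist_lineMap_left, Real.norm_of_nonneg ht.1, dist_eq_norm']
    calc ‖f' (g t) (y - x) - f' x (y - x)‖ = ‖(f' (g t) - f' x) (y - x)‖ := rfl
      _ ≤ ‖f' (g t) - f' x‖ * ‖y - x‖ := ContinuousLinearMap.le_opNorm _ _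
      _ ≤ M * ‖g t - x‖ * ‖y - x‖ := by
          gcongr; exact hf' _ (segm (Ico_subset_Icc_self ht))
      _ = M * ‖y - x‖ ^ 2 * t := by rw [hgt]; ring
  have fence := image_norm_le_of_norm_deriv_right_le_deriv_boundary
    (fun t ht => (hD t ht).continuousWithinAt)
    (fun t ht => (hD t (Ico_subset_Icc_self ht)).mono_of_mem_nhdsWithin
      (Icc_mem_nhdsGE_of_mem ht))
    (B := fun t => M * ‖y - x‖ ^ 2 * (t ^ 2 / 2)) (by simp [h, g])
    (fun t => by simpa using ((hasDerivAt_pow 2 t).div_const 2).const_mul (M * ‖y - x‖ ^ 2))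
    bound (right_mem_Icc.2 zero_le_one)
  simpa [h, g, mul_comm, mul_left_comm, mul_assoc, div_eq_mul_inv] using fence

theorem Convex.abs_divided_difference_sub_fderiv_le {φ : E → ℝ} {φ' : E → E →L[ℝ] ℝ}
    {s : Set E} {M δ₁ δ₂ : ℝ} {x v : E} (hs : Convex ℝ s)
    (hφ : ∀ z ∈ s, HasFDerivWithinAt φ (φ' z) s z)
    (hφ' : ∀ z ∈ s, ‖φ' z - φ' x‖ ≤ M * ‖z - x‖) (xs : x ∈ s)
    (h₁ : x + δ₁ • v ∈ s) (h₂ : x + δ₂ • v ∈ s) (hδ : δ₁ ≠ δ₂) :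
    |(φ (x + δ₂ • v) - φ (x + δ₁ • v)) / (δ₂ - δ₁) - φ' x v|
      ≤ M * (‖v‖ ^ 2 * (δ₁ ^ 2 + δ₂ ^ 2) / (2 * |δ₂ - δ₁|)) := by
  have remainder : ∀ δ : ℝ, x + δ • v ∈ s →
      |φ (x + δ • v) - φ x - δ * φ' x v| ≤ M / 2 * (δ ^ 2 * ‖v‖ ^ 2) := fun δ hδs => by
    have := hs.norm_image_sub_sub_fderiv_le hφ hφ' xs hδs
    rwa [add_sub_cancel_left, map_smul, smul_eq_mul, Real.norm_eq_abs, norm_smul, mul_pow,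
      Real.norm_eq_abs, sq_abs] at this
  have hne : δ₂ - δ₁ ≠ 0 := sub_ne_zero.2 hδ.symm
  have split : (φ (x + δ₂ • v) - φ (x + δ₁ • v)) / (δ₂ - δ₁) - φ' x v
      = ((φ (x + δ₂ • v) - φ x - δ₂ * φ' x v) - (φ (x + δ₁ • v) - φ x - δ₁ * φ' x v))
        / (δ₂ - δ₁) := by
    field_simp
    ring
  rw [split, abs_div]
  calc _ ≤ (M / 2 * (δ₂ ^ 2 * ‖v‖ ^ 2) + M / 2 * (δ₁ ^ 2 * ‖v‖ ^ 2)) / |δ₂ - δ₁| := by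
        gcongr
        exact (abs_sub _ _).trans (add_le_add (remainder δ₂ h₂) (remainder δ₁ h₁))
    _ = _ := by field_simp; ring

theorem Convex.abs_divided_difference_sub_fderiv_le_add {φ : E → ℝ}
    {φ' : E → E →L[ℝ] ℝ} {s : Set E} {M δ₁ δ₂ : ℝ} {x y v : E} (hs : Convex ℝ s)
    (hφ : ∀ z ∈ s, HasFDerivWithinAt φ (φ' z) s z)
    (hφ' : ∀ z ∈ s, ∀ w ∈ s, ‖φ' z - φ' w‖ ≤ M * ‖z - w‖) (xs : x ∈ s) (ys : y ∈ s)
    (h₁ : x + δ₁ • v ∈ s) (h₂ : x + δ₂ • v ∈ s) (hδ : δ₁ ≠ δ₂) :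
    |(φ (x + δ₂ • v) - φ (x + δ₁ • v)) / (δ₂ - δ₁) - φ' y v|
      ≤ M * (‖v‖ * ‖x - y‖ + ‖v‖ ^ 2 * (δ₁ ^ 2 + δ₂ ^ 2) / (2 * |δ₂ - δ₁|)) := by
  have shift : |φ' x v - φ' y v| ≤ M * (‖v‖ * ‖x - y‖) :=
    calc |φ' x v - φ' y v| = ‖(φ' x - φ' y) v‖ := rfl
      _ ≤ ‖φ' x - φ' y‖ * ‖v‖ := ContinuousLinearMap.le_opNorm _ _
      _ ≤ M * ‖x - y‖ * ‖v‖ := by gcongr; exact hφ' x xs y ys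
      _ = M * (‖v‖ * ‖x - y‖) := by ring
  calc _ ≤ |(φ (x + δ₂ • v) - φ (x + δ₁ • v)) / (δ₂ - δ₁) - φ' x v| + |φ' x v - φ' y v| :=
        abs_sub_le _ _ _
    _ ≤ _ := by
        rw [mul_add, add_comm (M * _)]
        exact add_le_add
          (hs.abs_divided_difference_sub_fderiv_le hφ (fun z zs => hφ' z zs x xs) xs h₁ h₂ hδ)
          shift

theorem ContDiffOn.norm_fderiv_sub_le {f : E → F} {s : Set E} {M : ℝ} {x y : E}
    (hf : ContDiffOn ℝ 2 f s) (hs : IsOpen s) (hconv : Convex ℝ s)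
    (hM : ∀ z ∈ s, ‖iteratedFDeriv ℝ 2 f z‖ ≤ M) (xs : x ∈ s) (ys : y ∈ s) :
    ‖fderiv ℝ f y - fderiv ℝ f x‖ ≤ M * ‖y - x‖ := by
  have hf' : ContDiffOn ℝ 1 (fderiv ℝ f) s := hf.fderiv_of_isOpen hs (by norm_num)
  refine hconv.norm_image_sub_le_of_norm_fderiv_le
    (fun z zs => (hf'.differentiableOn one_ne_zero).differentiableAt (hs.mem_nhds zs))
    (fun z zs => ?_) xs ys
  calc ‖fderiv ℝ (fderiv ℝ f) z‖ = ‖iteratedFDeriv ℝ 2 f z‖ := by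
        rw [← norm_iteratedFDeriv_zero (𝕜 := ℝ) (f := fderiv ℝ (fderiv ℝ f)),
          norm_iteratedFDeriv_fderiv, norm_iteratedFDeriv_fderiv]
    _ ≤ M := hM z zs

end

theorem norm_apply_sum_smul_sub_le {E F ι : Type*} [NormedAddCommGroup E]
    [InnerProductSpace ℝ E] [NormedAddCommGroup F] [NormedSpace ℝ F] [Fintype ι]
    (a : ι → F) (b : ι → E) (c : ι → ℝ) (Pinv : F →L[ℝ] E)
    (hexact : ∀ g, Pinv (∑ i, ⟪b i, g⟫ • a i) = g) (g : E) :
    ‖Pinv (∑ i, c i • a i) - g‖ ≤ ‖Pinv‖ * ∑ i, ‖a i‖ * |c i - ⟪b i, g⟫| := by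
  have : Pinv (∑ i, c i • a i) - g = Pinv (∑ i, (c i - ⟪b i, g⟫) • a i) := by
    conv_lhs => rw [← hexact g]
    simp only [← map_sub, ← Finset.sum_sub_distrib, sub_smul]
  rw [this]
  calc _ ≤ ‖Pinv‖ * ‖∑ i, (c i - ⟪b i, g⟫) • a i‖ := Pinv.le_opNorm _
    _ ≤ ‖Pinv‖ * ∑ i, ‖a i‖ * |c i - ⟪b i, g⟫| := by
        gcongr
        refine (norm_sum_le _ _).trans_eq (Finset.sum_congr rfl fun i _ => ?_)
        rw [norm_smul, Real.norm_eq_abs, mul_comm]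

theorem generalized_reconstruction_total_error_general (d m : ℕ)
    (U : Set (EuclideanSpace ℝ (Fin d))) (hU : IsOpen U) (hUconv : Convex ℝ U)
    (φ : EuclideanSpace ℝ (Fin d) → ℝ) (hφ : ContDiffOn ℝ 2 φ U)
    (M : ℝ) (hM : ∀ z ∈ U, ‖iteratedFDeriv ℝ 2 φ z‖ ≤ M)
    (xi : EuclideanSpace ℝ (Fin d)) (hxi : xi ∈ U)
    (a b x : Fin m → EuclideanSpace ℝ (Fin d)) (hx : ∀ f, x f ∈ U)
    (δ₁ δ₂ : Fin m → ℝ) (hδ : ∀ f, δ₁ f ≠ δ₂ f)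
    (h₁ : ∀ f, x f + δ₁ f • b f ∈ U) (h₂ : ∀ f, x f + δ₂ f • b f ∈ U)
    (P Pinv : EuclideanSpace ℝ (Fin d) →L[ℝ] EuclideanSpace ℝ (Fin d))
    (hP : ∀ g, P g = ∑ f : Fin m, ⟪b f, g⟫ • a f)
    (hleft : Function.LeftInverse Pinv P) :
    ‖Pinv (∑ f : Fin m,
          ((φ (x f + δ₂ f • b f) - φ (x f + δ₁ f • b f)) / (δ₂ f - δ₁ f)) • a f)
        - gradient φ xi‖
      ≤ ‖Pinv‖ * M * ∑ f : Fin m, ‖a f‖ *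
          (‖b f‖ * ‖x f - xi‖
            + ‖b f‖ ^ 2 * ((δ₁ f) ^ 2 + (δ₂ f) ^ 2) / (2 * |δ₂ f - δ₁ f|)) := by
  have hdiff : ∀ z ∈ U, HasFDerivWithinAt φ (fderiv ℝ φ z) U z := fun z hz =>
    ((hφ.differentiableOn (by norm_num)).differentiableAt
      (hU.mem_nhds hz)).hasFDerivAt.hasFDerivWithinAt
  have hlip : ∀ y ∈ U, ∀ z ∈ U, ‖fderiv ℝ φ y - fderiv ℝ φ z‖ ≤ M * ‖y - z‖ :=
    fun y hy z hz => hφ.norm_fderiv_sub_le hU hUconv hM hz hy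
  have hexact : ∀ g, Pinv (∑ f, ⟪b f, g⟫ • a f) = g := fun g => by rw [← hP]; exact hleft g
  calc _ ≤ ‖Pinv‖ * ∑ f, ‖a f‖ * |(φ (x f + δ₂ f • b f) - φ (x f + δ₁ f • b f))
            / (δ₂ f - δ₁ f) - ⟪b f, gradient φ xi⟫| :=
        norm_apply_sum_smul_sub_le a b _ Pinv hexact _
    _ ≤ ‖Pinv‖ * ∑ f, ‖a f‖ * (M * (‖b f‖ * ‖x f - xi‖
          + ‖b f‖ ^ 2 * ((δ₁ f) ^ 2 + (δ₂ f) ^ 2) / (2 * |δ₂ f - δ₁ f|))) := by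
        gcongr with f
        rw [real_inner_comm, inner_gradient_left]
        exact hUconv.abs_divided_difference_sub_fderiv_le_add hdiff hlip (hx f) hxi
          (h₁ f) (h₂ f) (hδ f)
    _ = _ := by
        simp only [Finset.mul_sum]
        exact Finset.sum_congr rfl fun f _ => by ring

/-- Total error bound (combining terms `E₁` and `E₂`) for the fully discrete
generalized gradient reconstruction
`G = Pinv (∑ f ((φ (x f + δ₂ f • b f) - φ (x f + δ₁ f • b f)) / (δ₂ f - δ₁ f)) • a f)`
for a `C²` function whose second derivative is bounded by `M` on an open convex
set `U` containing the cell center, the neighbourhood points and the evaluation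
points. -/
theorem generalized_reconstruction_total_error (d m : ℕ)
    (U : Set (EuclideanSpace ℝ (Fin d))) (hU : IsOpen U) (hUconv : Convex ℝ U)
    (φ : EuclideanSpace ℝ (Fin d) → ℝ) (hφ : ContDiffOn ℝ 2 φ U)
    (M : ℝ) (hM : ∀ z ∈ U, ‖iteratedFDeriv ℝ 2 φ z‖ ≤ M)
    (xi : EuclideanSpace ℝ (Fin d)) (hxi : xi ∈ U)
    (a b x : Fin m → EuclideanSpace ℝ (Fin d)) (hx : ∀ f, x f ∈ U)
    (δ₁ δ₂ : Fin m → ℝ) (hδ : ∀ f, δ₁ f ≠ δ₂ f)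
    (h₁ : ∀ f, x f + δ₁ f • b f ∈ U) (h₂ : ∀ f, x f + δ₂ f • b f ∈ U)
    (P Pinv : EuclideanSpace ℝ (Fin d) →L[ℝ] EuclideanSpace ℝ (Fin d))
    (hP : ∀ g, P g = ∑ f : Fin m, ⟪b f, g⟫ • a f)
    (hleft : Function.LeftInverse Pinv P)
    (hright : Function.RightInverse Pinv P) :
    ‖Pinv (∑ f : Fin m,
          ((φ (x f + δ₂ f • b f) - φ (x f + δ₁ f • b f)) / (δ₂ f - δ₁ f)) • a f)
        - gradient φ xi‖
      ≤ ‖Pinv‖ * M * ∑ f : Fin m, ‖a f‖ *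
          (‖b f‖ * ‖x f - xi‖
            + ‖b f‖ ^ 2 * ((δ₁ f) ^ 2 + (δ₂ f) ^ 2) / (2 * |δ₂ f - δ₁ f|)) :=
  generalized_reconstruction_total_error_general d m U hU hUconv φ hφ M hM xi hxi a b x hx δ₁ δ₂ hδ
    h₁ h₂ P Pinv hP hleft
end

section
/- Let E = EuclideanSpace ℝ (Fin d), let x_i ∈ E, and for f ∈ Fin m let a_f, b_f ∈ E and y_f ∈ E with y_f ≠ x_i; set r_f = (y_f − x_i)/‖y_f − x_i‖. Let α ∈ ℝ be arbitrary, and suppose the dyadic-sum operator P : E →ₗ[ℝ] E, P g = ∑_f ⟪b_f, g⟫ • a_f, is bijective. Then for every affine scalar field φ(x) = c + ⟪g, x⟫, the α-damped directional derivative D_f = α ‖b_f‖ (φ(y_f) − φ(x_i))/‖y_f − x_i‖ + ⟪b_f − α ‖b_f‖ • r_f, g⟫ equals ⟪b_f, g⟫ for every f, and consequently the flexible reconstruction is exact for every α: the unique G with P G = ∑_f D_f • a_f is G = g. -/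
open scoped RealInnerProductSpace BigOperators

/-!
For an affine `φ` the two-point difference quotient along `r = (y - x)/‖y - x‖` is exactly
`⟪g, r⟫`, so the damped two-point term `α ‖b‖ ⟪g, r⟫` and the correction `-⟪α ‖b‖ • r, g⟫`
cancel and the scheme returns `⟪b, g⟫` whatever `α` is. The reconstructed right-hand side is
then `P g`, and injectivity of `P` gives `G = g`.
-/

section DampedDirectionalDerivative

variable {E : Type*} [SeminormedAddCommGroup E] [InnerProductSpace ℝ E]

/-- The α-damped approximation of `⟪b, ∇φ⟫` on the face between the centres `x` and `y`,
with `G` standing for the averaged centroidal gradient `(∇φ_i + ∇φ_j)/2`. -/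
noncomputable def dampedDirDeriv (α : ℝ) (φ : E → ℝ) (x y b G : E) : ℝ :=
  α * ‖b‖ * (φ y - φ x) / ‖y - x‖ + ⟪b - (α * ‖b‖) • (‖y - x‖⁻¹ • (y - x)), G⟫

theorem sub_eq_inner_of_affine {φ : E → ℝ} {c : ℝ} {g : E} (hφ : ∀ z, φ z = c + ⟪g, z⟫)
    (x y : E) : φ y - φ x = ⟪g, y - x⟫ := by
  rw [hφ, hφ, inner_sub_right]
  ring

theorem dampedDirDeriv_of_affine {φ : E → ℝ} {c : ℝ} {g : E} (hφ : ∀ z, φ z = c + ⟪g, z⟫)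
    (α : ℝ) (x y b : E) : dampedDirDeriv α φ x y b g = ⟪b, g⟫ := by
  rw [dampedDirDeriv, sub_eq_inner_of_affine hφ, inner_sub_left, inner_smul_left,
    inner_smul_left, real_inner_comm (y - x) g, conj_trivial, conj_trivial, div_eq_mul_inv]
  ring

end DampedDirectionalDerivative

theorem flexible_scheme_exact_for_affine_general (d m : ℕ)
    (xi : EuclideanSpace ℝ (Fin d))
    (a b y : Fin m → EuclideanSpace ℝ (Fin d))
    (α : ℝ)
    (P : EuclideanSpace ℝ (Fin d) →ₗ[ℝ] EuclideanSpace ℝ (Fin d))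
    (hP : ∀ g, P g = ∑ f : Fin m, ⟪b f, g⟫ • a f)
    (hbij : Function.Bijective P)
    (φ : EuclideanSpace ℝ (Fin d) → ℝ) (c : ℝ) (g : EuclideanSpace ℝ (Fin d))
    (hφ : ∀ z, φ z = c + ⟪g, z⟫) :
    (∀ f : Fin m,
        α * ‖b f‖ * (φ (y f) - φ xi) / ‖y f - xi‖
          + ⟪b f - (α * ‖b f‖) • (‖y f - xi‖⁻¹ • (y f - xi)), g⟫
        = ⟪b f, g⟫)
    ∧ ∀ G : EuclideanSpace ℝ (Fin d),
        P G = ∑ f : Fin m,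
            (α * ‖b f‖ * (φ (y f) - φ xi) / ‖y f - xi‖
              + ⟪b f - (α * ‖b f‖) • (‖y f - xi‖⁻¹ • (y f - xi)), g⟫) • a f
        → G = g := by
  have hD : ∀ f, dampedDirDeriv α φ xi (y f) (b f) g = ⟪b f, g⟫ :=
    fun f => dampedDirDeriv_of_affine hφ α xi (y f) (b f)
  refine ⟨hD, fun G hG => hbij.injective ?_⟩
  rw [hG, hP]
  exact Finset.sum_congr rfl fun f _ => congrArg (· • a f) (hD f)

/-- The generalized flexible (α-damped) gradient scheme is exact for affine scalar
fields, for every value of the damping parameter `α`: with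
`r f = (y f - xᵢ)/‖y f - xᵢ‖`, the α-damped directional derivative
`D f = α ‖b f‖ (φ (y f) - φ xᵢ)/‖y f - xᵢ‖ + ⟪b f - α ‖b f‖ • r f, g⟫`
equals `⟪b f, g⟫` for every `f`, and consequently the unique `G` with
`P G = ∑ f D f • a f` is `G = g`, where `P g = ∑ f ⟪b f, g⟫ • a f` is the
bijective dyadic-sum operator. -/
theorem flexible_scheme_exact_for_affine (d m : ℕ)
    (xi : EuclideanSpace ℝ (Fin d))
    (a b y : Fin m → EuclideanSpace ℝ (Fin d))
    (hy : ∀ f, y f ≠ xi)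
    (α : ℝ)
    (P : EuclideanSpace ℝ (Fin d) →ₗ[ℝ] EuclideanSpace ℝ (Fin d))
    (hP : ∀ g, P g = ∑ f : Fin m, ⟪b f, g⟫ • a f)
    (hbij : Function.Bijective P)
    (φ : EuclideanSpace ℝ (Fin d) → ℝ) (c : ℝ) (g : EuclideanSpace ℝ (Fin d))
    (hφ : ∀ z, φ z = c + ⟪g, z⟫) :
    (∀ f : Fin m,
        α * ‖b f‖ * (φ (y f) - φ xi) / ‖y f - xi‖
          + ⟪b f - (α * ‖b f‖) • (‖y f - xi‖⁻¹ • (y f - xi)), g⟫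
        = ⟪b f, g⟫)
    ∧ ∀ G : EuclideanSpace ℝ (Fin d),
        P G = ∑ f : Fin m,
            (α * ‖b f‖ * (φ (y f) - φ xi) / ‖y f - xi‖
              + ⟪b f - (α * ‖b f‖) • (‖y f - xi‖⁻¹ • (y f - xi)), g⟫) • a f
        → G = g :=
  flexible_scheme_exact_for_affine_general d m xi a b y α P hP hbij φ c g hφ
end

section
/- Let E = EuclideanSpace ℝ (Fin d), let x ≠ y be points of E, r = (y − x)/‖y − x‖, b ∈ E, and α ∈ ℝ. Let φ(z) = c + ⟪g, z⟫ be an affine scalar field, and let G_x, G_y ∈ E be approximate gradients with ‖G_x − g‖ ≤ Ε and ‖G_y − g‖ ≤ Ε. Then the two-step α-damped directional derivative satisfies |α ‖b‖ (φ(y) − φ(x))/‖y − x‖ + ⟪b − α ‖b‖ • r, (G_x + G_y)/2⟫ − ⟪b, g⟫| ≤ ‖b − α ‖b‖ • r‖ · Ε. -/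
/-!
For an affine field `φ z = c + ⟪g, z⟫` the difference quotient along `r` is exactly `⟪r, g⟫`, so the
damped formula with the exact gradient `g` reproduces `⟪b, g⟫`. The error is therefore
`⟪b - α ‖b‖ • r, (Gx + Gy)/2 - g⟫`, which Cauchy–Schwarz bounds by `‖b - α ‖b‖ • r‖` times
the error of the averaged gradient, itself at most `E`.
-/

open scoped RealInnerProductSpace

section

variable {F : Type*} [NormedAddCommGroup F] [InnerProductSpace ℝ F]

theorem norm_inv_two_smul_add_sub_le {u v g : F} {E : ℝ} (hu : ‖u - g‖ ≤ E) (hv : ‖v - g‖ ≤ E) :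
    ‖(2 : ℝ)⁻¹ • (u + v) - g‖ ≤ E := by
  have hsplit : (2 : ℝ)⁻¹ • (u + v) - g = (2 : ℝ)⁻¹ • ((u - g) + (v - g)) := by module
  calc ‖(2 : ℝ)⁻¹ • (u + v) - g‖ = 2⁻¹ * ‖(u - g) + (v - g)‖ := by
        rw [hsplit, norm_smul, norm_inv, Real.norm_two]
    _ ≤ 2⁻¹ * (‖u - g‖ + ‖v - g‖) := by gcongr; exact norm_add_le _ _
    _ ≤ E := by linarith

/-- Valid also for `x = y`, where both sides vanish. -/
theorem mul_sub_div_norm_eq_inner_of_affine {φ : F → ℝ} {c : ℝ} {g : F}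
    (hφ : ∀ z, φ z = c + ⟪g, z⟫) (β : ℝ) (x y : F) :
    β * (φ y - φ x) / ‖y - x‖ = ⟪β • (‖y - x‖⁻¹ • (y - x)), g⟫ := by
  rw [hφ, hφ, add_sub_add_left_eq_sub, ← inner_sub_right, inner_smul_left, inner_smul_left,
    real_inner_comm]
  simp only [conj_trivial]
  ring

theorem two_step_error_eq_inner_of_affine {φ : F → ℝ} {c : ℝ} {g : F}
    (hφ : ∀ z, φ z = c + ⟪g, z⟫) (β : ℝ) (x y b G : F) :
    β * (φ y - φ x) / ‖y - x‖ + ⟪b - β • (‖y - x‖⁻¹ • (y - x)), G⟫ - ⟪b, g⟫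
      = ⟪b - β • (‖y - x‖⁻¹ • (y - x)), G - g⟫ := by
  rw [mul_sub_div_norm_eq_inner_of_affine hφ, inner_sub_right, inner_sub_left b _ g]
  ring

end

theorem two_step_flexible_directional_derivative_error_general (d : ℕ)
    (x y : EuclideanSpace ℝ (Fin d))
    (b : EuclideanSpace ℝ (Fin d)) (α : ℝ)
    (φ : EuclideanSpace ℝ (Fin d) → ℝ) (c : ℝ) (g : EuclideanSpace ℝ (Fin d))
    (hφ : ∀ z, φ z = c + ⟪g, z⟫)
    (Gx Gy : EuclideanSpace ℝ (Fin d)) (E : ℝ)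
    (hGx : ‖Gx - g‖ ≤ E) (hGy : ‖Gy - g‖ ≤ E) :
    |α * ‖b‖ * (φ y - φ x) / ‖y - x‖
        + ⟪b - (α * ‖b‖) • (‖y - x‖⁻¹ • (y - x)), (2 : ℝ)⁻¹ • (Gx + Gy)⟫
        - ⟪b, g⟫|
      ≤ ‖b - (α * ‖b‖) • (‖y - x‖⁻¹ • (y - x))‖ * E := by
  rw [two_step_error_eq_inner_of_affine hφ]
  exact (abs_real_inner_le_norm _ _).trans <|
    mul_le_mul_of_nonneg_left (norm_inv_two_smul_add_sub_le hGx hGy) (norm_nonneg _)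

/-- Accuracy of the two-step α-damped directional derivative: if `φ z = c + ⟪g, z⟫`
is affine and the precomputed approximate gradients `Gx`, `Gy` at the two cell
centers `x ≠ y` satisfy `‖Gx - g‖ ≤ E` and `‖Gy - g‖ ≤ E`, then with
`r = (y - x)/‖y - x‖` the two-step α-damped directional derivative satisfies
`|α ‖b‖ (φ y - φ x)/‖y - x‖ + ⟪b - α ‖b‖ • r, (Gx + Gy)/2⟫ - ⟪b, g⟫| ≤ ‖b - α ‖b‖ • r‖ * E`. -/
theorem two_step_flexible_directional_derivative_error (d : ℕ)
    (x y : EuclideanSpace ℝ (Fin d)) (hxy : x ≠ y)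
    (b : EuclideanSpace ℝ (Fin d)) (α : ℝ)
    (φ : EuclideanSpace ℝ (Fin d) → ℝ) (c : ℝ) (g : EuclideanSpace ℝ (Fin d))
    (hφ : ∀ z, φ z = c + ⟪g, z⟫)
    (Gx Gy : EuclideanSpace ℝ (Fin d)) (E : ℝ)
    (hGx : ‖Gx - g‖ ≤ E) (hGy : ‖Gy - g‖ ≤ E) :
    |α * ‖b‖ * (φ y - φ x) / ‖y - x‖
        + ⟪b - (α * ‖b‖) • (‖y - x‖⁻¹ • (y - x)), (2 : ℝ)⁻¹ • (Gx + Gy)⟫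
        - ⟪b, g⟫|
      ≤ ‖b - (α * ‖b‖) • (‖y - x‖⁻¹ • (y - x))‖ * E :=
  two_step_flexible_directional_derivative_error_general d x y b α φ c g hφ Gx Gy E hGx hGy
end
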